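/- arXiv:2010.00976 — 2 statements merged into one kernel-verified Lean document; each statement's English description precedes it below -/
import Mathlib

section
/- Let n ∈ ℕ, a ∈ C¹([0,1]) with a > 0, and f ∈ C¹([0,∞)) satisfy (f_eq) and (f_sgn). If u ∈ C²([0,1]) satisfies −(φ_n(u'))' = a(x) f̂(u) in (0,1) and u'(0) = u'(1) = 0, then either u is constant, identically equal to −C for some C ≥ 0, or u(x) > 0 for every x ∈ [0,1]. -/
/-!
If `u` is not positive on `[0,1]`, its minimum `c = u x₀ ≤ 0` is attained at a point where
`u' = 0` (an interior minimum, or an endpoint by the Neumann conditions). As `f(0) = 0`, `f̂`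
vanishes on `(-∞, c]`, so `(c, 0)` is an equilibrium of the first-order system satisfied by
`(u, φₙ(u'))`. Since `φₙ' ≥ φ'(n) > 0` and `f̂` is Lipschitz on the range of `u`, the
quantity `H = (u - c)² + φₙ(u')²` satisfies `|H'| ≤ C H` and vanishes at `x₀`, so by
Gronwall's inequality it vanishes identically and `u ≡ c`.
-/

open Set MeasureTheory Filter Topology

noncomputable section

/-- `φ(s) = s / √(1+s²)`. -/
def phi (s : ℝ) : ℝ := s / Real.sqrt (1 + s ^ 2)

/-- `φ'(s) = (1+s²)^(-3/2)`. -/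
def phiD (s : ℝ) : ℝ := 1 / (Real.sqrt (1 + s ^ 2)) ^ 3

/-- the inverse of `φ`, a bijection of `(-1,1)` onto `ℝ`. -/
def phiInv (y : ℝ) : ℝ := y / Real.sqrt (1 - y ^ 2)

/-- the approximation `φₙ`: equal to `φ` on `[-n,n]`, affine outside. -/
def phiN (n : ℕ) (s : ℝ) : ℝ :=
  if (n : ℝ) < s then phi n + phiD n * (s - n)
  else if s < -(n : ℝ) then -phi n + phiD n * (s + n)
  else phi s

/-- `Φ(s) = √(1+s²) - 1`. -/
def PhiBig (s : ℝ) : ℝ := Real.sqrt (1 + s ^ 2) - 1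

/-- `Φₙ(s) = ∫₀ˢ φₙ`. -/
def PhiNBig (n : ℕ) (s : ℝ) : ℝ := ∫ t in (0:ℝ)..s, phiN n t

/-- the extension `f̂` of `f` vanishing on the negatives. -/
def fhat (f : ℝ → ℝ) (s : ℝ) : ℝ := if s < 0 then 0 else f s

/-- `F(s) = ∫_{u0}^s f`. -/
def Fprim (f : ℝ → ℝ) (u0 s : ℝ) : ℝ := ∫ t in u0..s, f t

/-- assumption `(f_eq)`. -/
def Feq (f : ℝ → ℝ) (u0 : ℝ) : Prop := f 0 = 0 ∧ f u0 = 0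

/-- assumption `(f_sgn)`. -/
def Fsgn (f : ℝ → ℝ) (u0 : ℝ) : Prop :=
  (∀ s, 0 < s → s < u0 → f s < 0) ∧ (∀ s, u0 < s → 0 < f s)

/-- the constant `C_a`. -/
def Ca (a : ℝ → ℝ) : ℝ :=
  max ((a 1 / a 0) * Real.exp (∫ x in (0:ℝ)..1, max (-deriv a x) 0 / a x))
      ((a 0 / a 1) * Real.exp (∫ x in (0:ℝ)..1, max (deriv a x) 0 / a x))

/-- assumption `(f_ap)`, with the value `ū` made explicit. -/
def Fap (a f : ℝ → ℝ) (u0 ubar : ℝ) : Prop :=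
  u0 < ubar ∧ (∫ s in u0..ubar, f s) = Ca a * ∫ s in u0..(0:ℝ), f s

/-- assumption `(f_ap)'`. -/
def Fap' (a f : ℝ → ℝ) : Prop :=
  (∫ x in (0:ℝ)..1, a x) * sSup ((fun s => max (-f s) 0) '' Ici 0) < 1

/-- classical solution of the approximated Neumann problem `(Pₙ)`. -/
def IsPnSol (a f : ℝ → ℝ) (n : ℕ) (u : ℝ → ℝ) : Prop :=
  ContDiff ℝ 2 u ∧ (∀ x ∈ Ioo (0:ℝ) 1, 0 < u x) ∧
  deriv u 0 = 0 ∧ deriv u 1 = 0 ∧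
  ∀ x ∈ Ioo (0:ℝ) 1, -deriv (fun y => phiN n (deriv u y)) x = a x * f (u x)

/-- classical solution of the prescribed mean curvature Neumann problem `(P)`. -/
def IsPSol (a f : ℝ → ℝ) (u : ℝ → ℝ) : Prop :=
  ContDiff ℝ 2 u ∧ (∀ x ∈ Ioo (0:ℝ) 1, 0 < u x) ∧
  deriv u 0 = 0 ∧ deriv u 1 = 0 ∧
  ∀ x ∈ Ioo (0:ℝ) 1, -deriv (fun y => phi (deriv u y)) x = a x * f (u x)

/-- solution of the Cauchy problem with initial datum `d`. -/
def IsCauchySol (a f : ℝ → ℝ) (n : ℕ) (d : ℝ) (u : ℝ → ℝ) : Prop :=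
  ContDiff ℝ 2 u ∧ u 0 = d ∧ deriv u 0 = 0 ∧
  ∀ x ∈ Ioo (0:ℝ) 1, -deriv (fun y => phiN n (deriv u y)) x = a x * fhat f (u x)

/-- `θ` is a (clockwise) angular variable for `(u - u0, φₙ(u'))` around `(u0,0)`. -/
def IsAngle (n : ℕ) (u0 : ℝ) (u θ : ℝ → ℝ) : Prop :=
  ContinuousOn θ (Icc 0 1) ∧
  ∀ x ∈ Icc (0:ℝ) 1,
    u x - u0 = Real.sqrt ((u x - u0) ^ 2 + phiN n (deriv u x) ^ 2) * Real.cos (θ x) ∧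
    phiN n (deriv u x) = -(Real.sqrt ((u x - u0) ^ 2 + phiN n (deriv u x) ^ 2) * Real.sin (θ x))

/-- non-constant on `(0,1)`. -/
def Nonconstant (u : ℝ → ℝ) : Prop := ∃ x ∈ Ioo (0:ℝ) 1, ∃ y ∈ Ioo (0:ℝ) 1, u x ≠ u y

/-- the set of points of `(0,1)` where `u` takes the value `u0`. -/
def zeroSet (u : ℝ → ℝ) (u0 : ℝ) : Set ℝ := {x | x ∈ Ioo (0:ℝ) 1 ∧ u x = u0}

/-- the hypothesis `f'(u0) > λ_{k+1}`: there is `λ̄ < f'(u0)` admitting a nontrivial Neumann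
eigenfunction of `-w'' = λ̄ a w` with exactly `k` zeros in `(0,1)`. -/
def EigenHyp (a f : ℝ → ℝ) (u0 : ℝ) (k : ℕ) : Prop :=
  ∃ lam : ℝ, ∃ w : ℝ → ℝ, lam < deriv f u0 ∧ ContDiff ℝ 2 w ∧
    (∃ x ∈ Icc (0:ℝ) 1, w x ≠ 0) ∧
    (∀ x ∈ Ioo (0:ℝ) 1, -deriv (deriv w) x = lam * a x * w x) ∧
    deriv w 0 = 0 ∧ deriv w 1 = 0 ∧ (zeroSet w 0).ncard = k

/-- the functional `J(v) = ∫₀¹ √(1+|Dv|²)`. -/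
def Jfun (v : ℝ → ℝ) : ℝ :=
  sSup { r : ℝ | ∃ w₁ w₂ : ℝ → ℝ, ContDiff ℝ 1 w₁ ∧ ContDiff ℝ 1 w₂ ∧
    tsupport w₁ ⊆ Ioo 0 1 ∧ tsupport w₂ ⊆ Ioo 0 1 ∧
    (∀ x, w₁ x ^ 2 + w₂ x ^ 2 ≤ 1) ∧
    r = ∫ x in Ioo (0:ℝ) 1, (v x * deriv w₁ x + w₂ x) }

/-- BV-solution of the Neumann problem `(P)`. -/
def IsBVSol (a f : ℝ → ℝ) (u : ℝ → ℝ) : Prop :=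
  BoundedVariationOn u (Ioo 0 1) ∧ (∀ x ∈ Ioo (0:ℝ) 1, 0 ≤ u x) ∧
  ∀ v : ℝ → ℝ, BoundedVariationOn v (Ioo 0 1) →
    Jfun u + ∫ x in Ioo (0:ℝ) 1, a x * f (u x) * (v x - u x) ≤ Jfun v

/-- `u - u0` changes sign at `z`. -/
def ChangesSign (u : ℝ → ℝ) (u0 z : ℝ) : Prop :=
  ∃ δ > (0:ℝ), ((∀ x ∈ Ioo (z - δ) z, u x < u0) ∧ (∀ x ∈ Ioo z (z + δ), u0 < u x)) ∨
           ((∀ x ∈ Ioo (z - δ) z, u0 < u x) ∧ (∀ x ∈ Ioo z (z + δ), u x < u0))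

/-- the energy `Eₙ` along a solution of `(Pₙ)`. -/
def EnergyN (a f : ℝ → ℝ) (u0 : ℝ) (n : ℕ) (u : ℝ → ℝ) (x : ℝ) : ℝ :=
  deriv u x * phiN n (deriv u x) - PhiNBig n (deriv u x) + a x * Fprim f u0 (u x)

/-- the energy `ℰ` of `u` extends to a continuous function on `[0,1]`. -/
def HasContinuousEnergy (a f : ℝ → ℝ) (u0 : ℝ) (u : ℝ → ℝ) : Prop :=
  ∃ E : ℝ → ℝ, ContinuousOn E (Icc 0 1) ∧
    ∀ x ∈ Ioo (0:ℝ) 1, ContinuousAt u x →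
      (DifferentiableAt ℝ u x →
        E x = 1 - 1 / Real.sqrt (1 + deriv u x ^ 2) + a x * Fprim f u0 (u x)) ∧
      (¬ DifferentiableAt ℝ u x → E x = 1 + a x * Fprim f u0 (u x))

/-- the oscillatory structure of the BV-solutions of Theorem 1.1: `m` generalized
intersections with `u0`, with starting sign `σ` (`σ = 1` for case (I), `σ = -1` for case (II)). -/
def OscStructure (u0 : ℝ) (u : ℝ → ℝ) (m : ℕ) (σ : ℝ) : Prop :=
  ∃ x : ℕ → ℝ,
    x 0 = 0 ∧ x (m + 1) = 1 ∧ (∀ i ≤ m, x i < x (i + 1)) ∧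
    ContDiffOn ℝ 2 u (Ico 0 (x 1)) ∧ ContDiffOn ℝ 2 u (Ioc (x m) 1) ∧
    (∀ i, 1 ≤ i → i + 1 ≤ m → ContDiffOn ℝ 2 u (Ioo (x i) (x (i + 1)))) ∧
    derivWithin u (Icc 0 1) 0 = 0 ∧ derivWithin u (Icc 0 1) 1 = 0 ∧
    (∀ i ≤ m, ∀ y ∈ Ioo (x i) (x (i + 1)), 0 < σ * (-1 : ℝ) ^ (i + 1) * (u y - u0)) ∧
    ∀ i, 1 ≤ i → i ≤ m →
      (u (x i) = u0 ∧ ContDiffOn ℝ 2 u (Ioo (x (i - 1)) (x (i + 1)))) ∨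
      (∃ L R : ℝ, Tendsto u (𝓝[<] x i) (𝓝 L) ∧ Tendsto u (𝓝[>] x i) (𝓝 R) ∧
        (0 < σ * (-1 : ℝ) ^ (i + 1) →
          L ≤ u0 ∧ u0 ≤ R ∧ Tendsto (deriv u) (𝓝[<] x i) atTop ∧
            Tendsto (deriv u) (𝓝[>] x i) atTop) ∧
        (σ * (-1 : ℝ) ^ (i + 1) < 0 →
          R ≤ u0 ∧ u0 ≤ L ∧ Tendsto (deriv u) (𝓝[<] x i) atBot ∧
            Tendsto (deriv u) (𝓝[>] x i) atBot))

lemma phiD_pos (s : ℝ) : 0 < phiD s := by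
  unfold phiD
  positivity

lemma hasDerivAt_phi (s : ℝ) : HasDerivAt phi (phiD s) s := by
  have hr : 0 < Real.sqrt (1 + s ^ 2) := by positivity
  have hr2 : Real.sqrt (1 + s ^ 2) ^ 2 = 1 + s ^ 2 := Real.sq_sqrt (by positivity)
  have hsqrt : HasDerivAt (fun t : ℝ => Real.sqrt (1 + t ^ 2))
      (2 * s / (2 * Real.sqrt (1 + s ^ 2))) s :=
    (((hasDerivAt_pow 2 s).const_add 1).congr_deriv (by ring)).sqrt (by positivity)
  have hquot : HasDerivAt phi _ s := (hasDerivAt_id s).div hsqrt hr.ne'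
  convert hquot using 1
  simp only [phiD, id]
  field_simp
  linear_combination -hr2

lemma phiN_eq_phi {n : ℕ} {s : ℝ} (h₁ : -(n : ℝ) ≤ s) (h₂ : s ≤ n) : phiN n s = phi s := by
  unfold phiN
  rw [if_neg (by linarith), if_neg (by linarith)]

lemma phiN_apply_zero (n : ℕ) : phiN n 0 = 0 := by
  rw [phiN_eq_phi (by simp) (Nat.cast_nonneg n)]
  simp [phi]

lemma phiN_neg (n : ℕ) (s : ℝ) : phiN n (-s) = -phiN n s := by
  have hphi : phi (-s) = -phi s := by unfold phi; rw [neg_sq, neg_div]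
  unfold phiN
  split_ifs <;> first | (exfalso; linarith) | rw [hphi] | ring

lemma phiN_zero_eq_id : phiN 0 = id := by
  funext s
  have hD : phiD 0 = 1 := by simp [phiD]
  unfold phiN
  simp only [Nat.cast_zero, neg_zero, hD, phi, id]
  split_ifs with h₁ h₂
  · simp
  · simp
  · rw [le_antisymm (not_lt.mp h₁) (not_lt.mp h₂)]
    simp

/-- `φ' = phiD` decreases on `[0, ∞)`, so `φ t = ∫₀ᵗ φ' ≥ φ'(n) t` for `t ≤ n`; beyond `n`, `φₙ`
grows with slope exactly `φ'(n)`. -/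
lemma phiD_mul_le_phiN {n : ℕ} {s : ℝ} (hs : 0 ≤ s) : phiD n * s ≤ phiN n s := by
  have hn : (0 : ℝ) ≤ n := Nat.cast_nonneg n
  have hr : 0 < Real.sqrt (1 + (n : ℝ) ^ 2) := by positivity
  have hr3 : Real.sqrt (1 + (n : ℝ) ^ 2) ^ 3
      = (1 + (n : ℝ) ^ 2) * Real.sqrt (1 + (n : ℝ) ^ 2) := by
    rw [pow_succ, Real.sq_sqrt (by positivity)]
  have hphi : ∀ t : ℝ, 0 ≤ t → t ≤ n → phiD n * t ≤ phi t := fun t ht htn => by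
    have hle : Real.sqrt (1 + t ^ 2) ≤ Real.sqrt (1 + (n : ℝ) ^ 2) :=
      Real.sqrt_le_sqrt (by nlinarith)
    unfold phi phiD
    rw [div_mul_eq_mul_div, div_le_div_iff₀ (by positivity) (by positivity), hr3]
    nlinarith [mul_le_mul_of_nonneg_left hle ht,
      mul_nonneg (mul_nonneg ht (sq_nonneg (n : ℝ))) hr.le]
  unfold phiN
  split_ifs with h₁ h₂
  · nlinarith [hphi n hn le_rfl]
  · linarith
  · exact hphi s hs (not_lt.mp h₁)

lemma phiD_mul_abs_le_abs_phiN (n : ℕ) (s : ℝ) : phiD n * |s| ≤ |phiN n s| := by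
  have hD := phiD_pos n
  rcases le_or_gt 0 s with hs | hs
  · have h := phiD_mul_le_phiN (n := n) hs
    rw [abs_of_nonneg hs, abs_of_nonneg ((mul_nonneg hD.le hs).trans h)]
    exact h
  · have h := phiD_mul_le_phiN (n := n) (neg_nonneg.mpr hs.le)
    rw [phiN_neg] at h
    rw [abs_of_neg hs, abs_of_nonpos (by nlinarith)]
    linarith

lemma differentiableAt_phiN_of_nonneg {n : ℕ} (hn : 0 < n) {s : ℝ} (hs : 0 ≤ s) :
    DifferentiableAt ℝ (phiN n) s := by
  have hn' : (0 : ℝ) < n := Nat.cast_pos.mpr hn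
  have haffine : ∀ t : ℝ, HasDerivAt (fun t => phi n + phiD n * (t - n)) (phiD n) t := fun t => by
    simpa using (((hasDerivAt_id t).sub_const (n : ℝ)).const_mul (phiD n)).const_add (phi n)
  rcases lt_trichotomy s n with hlt | rfl | hgt
  · have hev : phiN n =ᶠ[𝓝 s] phi := by
      filter_upwards [Ioo_mem_nhds (by linarith : -(n : ℝ) < s) hlt] with t ht
      exact phiN_eq_phi ht.1.le ht.2.le
    exact ((hasDerivAt_phi s).congr_of_eventuallyEq hev).differentiableAt
  · have hleft : HasDerivWithinAt (phiN n) (phiD n) (Iic (n : ℝ)) n := by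
      refine (hasDerivAt_phi n).hasDerivWithinAt.congr_of_eventuallyEq ?_
        (phiN_eq_phi (by linarith) le_rfl)
      filter_upwards [self_mem_nhdsWithin,
        mem_nhdsWithin_of_mem_nhds (Ioi_mem_nhds (by linarith : -(n : ℝ) < n))] with t ht₁ ht₂
      exact phiN_eq_phi (le_of_lt ht₂) ht₁
    have hright : HasDerivWithinAt (phiN n) (phiD n) (Ici (n : ℝ)) n := by
      refine (haffine n).hasDerivWithinAt.congr (fun t ht => ?_) ?_
      · rcases (mem_Ici.mp ht).lt_or_eq with h | h
        · simp only [phiN, if_pos h]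
        · rw [← h, phiN_eq_phi (by linarith) le_rfl]
          ring
      · rw [phiN_eq_phi (by linarith) le_rfl]
        ring
    have hboth := hleft.union hright
    rw [Iic_union_Ici, hasDerivWithinAt_univ] at hboth
    exact hboth.differentiableAt
  · have hev : phiN n =ᶠ[𝓝 s] fun t => phi n + phiD n * (t - n) := by
      filter_upwards [Ioi_mem_nhds hgt] with t ht
      simp only [phiN, if_pos (show (n : ℝ) < t from ht)]
    exact ((haffine s).congr_of_eventuallyEq hev).differentiableAt

lemma differentiable_phiN (n : ℕ) : Differentiable ℝ (phiN n) := by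
  rcases Nat.eq_zero_or_pos n with rfl | hn
  · rw [phiN_zero_eq_id]
    exact differentiable_id
  intro s
  rcases le_or_gt 0 s with hs | hs
  · exact differentiableAt_phiN_of_nonneg hn hs
  · have hodd : phiN n = fun t => -phiN n (-t) := funext fun t => by rw [phiN_neg, neg_neg]
    rw [hodd]
    exact ((differentiableAt_phiN_of_nonneg hn (neg_nonneg.2 hs.le)).comp s
      differentiableAt_id.neg).neg

section Gronwall

variable {H H' : ℝ → ℝ} {C a b : ℝ}

lemma nonpos_of_hasDerivAt_le_mul (hH : ContinuousOn H (Icc a b))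
    (hH' : ∀ x ∈ Ioo a b, HasDerivAt H (H' x) x) (hbound : ∀ x ∈ Ioo a b, H' x ≤ C * H x)
    (ha : H a ≤ 0) : ∀ x ∈ Icc a b, H x ≤ 0 := by
  have hanti : AntitoneOn (fun x => H x * Real.exp (-C * x)) (Icc a b) := by
    have hexp : ∀ x : ℝ, HasDerivAt (fun x => Real.exp (-C * x)) (Real.exp (-C * x) * -C) x :=
      fun x => by simpa using ((hasDerivAt_id x).const_mul (-C)).exp
    refine antitoneOn_of_hasDerivWithinAt_nonpos
      (f' := fun x => H' x * Real.exp (-C * x) + H x * (Real.exp (-C * x) * -C)) (convex_Icc a b)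
      (hH.mul (by fun_prop)) (fun x hx => ?_) (fun x hx => ?_)
    · rw [interior_Icc] at hx
      exact ((hH' x hx).mul (hexp x)).hasDerivWithinAt
    · rw [interior_Icc] at hx
      nlinarith [hbound x hx, Real.exp_pos (-C * x)]
  intro x hx
  have hmono := hanti ⟨le_rfl, hx.1.trans hx.2⟩ hx hx.1
  nlinarith [Real.exp_pos (-C * x), Real.exp_pos (-C * a)]

lemma eqOn_zero_of_abs_deriv_le_mul_of_left (hH : ContinuousOn H (Icc a b))
    (hH' : ∀ x ∈ Ioo a b, HasDerivAt H (H' x) x) (hbound : ∀ x ∈ Ioo a b, |H' x| ≤ C * H x)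
    (ha : H a = 0) : ∀ x ∈ Icc a b, H x = 0 := fun x hx =>
  le_antisymm
    (nonpos_of_hasDerivAt_le_mul hH hH' (fun y hy => (abs_le.mp (hbound y hy)).2) ha.le x hx)
    (neg_nonpos.mp <| nonpos_of_hasDerivAt_le_mul (C := -C) hH.neg (fun y hy => (hH' y hy).neg)
      (fun y hy => by simp only [Pi.neg_apply]; linarith [(abs_le.mp (hbound y hy)).1])
      (by simp [ha]) x hx)

lemma eqOn_zero_of_abs_deriv_le_mul {x₀ : ℝ} (hH : ContinuousOn H (Icc a b))
    (hH' : ∀ x ∈ Ioo a b, HasDerivAt H (H' x) x) (hbound : ∀ x ∈ Ioo a b, |H' x| ≤ C * H x)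
    (hx₀ : x₀ ∈ Icc a b) (h₀ : H x₀ = 0) : ∀ x ∈ Icc a b, H x = 0 := by
  intro x hx
  rcases le_total x₀ x with hle | hle
  · exact eqOn_zero_of_abs_deriv_le_mul_of_left (hH.mono (Icc_subset_Icc_left hx₀.1))
      (fun y hy => hH' y ⟨hx₀.1.trans_lt hy.1, hy.2⟩)
      (fun y hy => hbound y ⟨hx₀.1.trans_lt hy.1, hy.2⟩) h₀ x ⟨hle, hx.2⟩
  · have hrefl := eqOn_zero_of_abs_deriv_le_mul_of_left (H := fun t => H (-t))
      (H' := fun t => H' (-t) * -1) (C := C) (a := -x₀) (b := -a)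
      (hH.comp continuousOn_neg fun t ht => ⟨le_neg.mp ht.2, (neg_le.mp ht.1).trans hx₀.2⟩)
      (fun t ht => (hH' (-t) ⟨lt_neg.mp ht.2, (neg_lt.mp ht.1).trans_le hx₀.2⟩).comp t
        (hasDerivAt_neg t))
      (fun t ht => by
        simpa using hbound (-t) ⟨lt_neg.mp ht.2, (neg_lt.mp ht.1).trans_le hx₀.2⟩)
      (by simpa using h₀) (-x) ⟨neg_le_neg hle, neg_le_neg hx.1⟩
    simpa using hrefl

end Gronwall

lemma exists_abs_fhat_le {f : ℝ → ℝ} (hf : ContDiffOn ℝ 1 f (Ici 0)) (hf₀ : f 0 = 0) (K : ℝ) :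
    ∃ L : ℝ, 0 ≤ L ∧ ∀ p ≤ K, |fhat f p| ≤ L * max p 0 := by
  obtain ⟨L, hL⟩ := ((hf.mono Icc_subset_Ici_self).locallyLipschitzOn
    (convex_Icc 0 K)).exists_lipschitzOnWith_of_compact isCompact_Icc
  refine ⟨L, L.2, fun p hpK => ?_⟩
  rcases lt_or_ge p 0 with hp | hp
  · simp only [fhat, if_pos hp, abs_zero]
    positivity
  · have hlip := hL.dist_le_mul p ⟨hp, hpK⟩ 0 ⟨le_rfl, hp.trans hpK⟩
    simpa [fhat, not_lt.mpr hp, Real.dist_eq, hf₀, abs_of_nonneg hp, max_eq_left hp] using hlip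

lemma deriv_eq_zero_of_isMinOn_Icc {u : ℝ → ℝ} {a b x₀ : ℝ} (ha : deriv u a = 0)
    (hb : deriv u b = 0) (hx₀ : x₀ ∈ Icc a b) (hmin : IsMinOn u (Icc a b) x₀) :
    deriv u x₀ = 0 := by
  rcases hx₀.1.eq_or_lt with rfl | hax₀
  · exact ha
  rcases hx₀.2.eq_or_lt with rfl | hx₀b
  · exact hb
  exact (hmin.isLocalMin (Icc_mem_nhds hax₀ hx₀b)).deriv_eq_zero

lemma abs_two_mul_add_two_mul_le {p q r s A B : ℝ} (hA : 0 ≤ A) (hB : 0 ≤ B)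
    (hr : |r| ≤ A * |q|) (hs : |s| ≤ B * |p|) :
    |2 * p * r + 2 * q * s| ≤ (A + B) * (p ^ 2 + q ^ 2) := by
  have hpq : 2 * |p| * |q| ≤ p ^ 2 + q ^ 2 := by
    simpa only [sq_abs] using two_mul_le_add_sq |p| |q|
  calc |2 * p * r + 2 * q * s| ≤ 2 * |p| * |r| + 2 * |q| * |s| := by
        refine (abs_add_le _ _).trans_eq ?_
        simp only [abs_mul, abs_two]
    _ ≤ 2 * |p| * (A * |q|) + 2 * |q| * (B * |p|) := by gcongr
    _ = (A + B) * (2 * |p| * |q|) := by ring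
    _ ≤ (A + B) * (p ^ 2 + q ^ 2) := by gcongr

lemma eqOn_Icc_of_isMinOn_of_nonpos (n : ℕ) {a f u : ℝ → ℝ} (ha : ContinuousOn a (Icc 0 1))
    (hf : ContDiffOn ℝ 1 f (Ici 0)) (hf₀ : f 0 = 0) (hu : ContDiff ℝ 2 u)
    (hode : ∀ x ∈ Ioo (0:ℝ) 1, -deriv (fun y => phiN n (deriv u y)) x = a x * fhat f (u x))
    {x₀ : ℝ} (hx₀ : x₀ ∈ Icc 0 1) (hmin : IsMinOn u (Icc 0 1) x₀) (hc : u x₀ ≤ 0)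
    (hd : deriv u x₀ = 0) : ∀ x ∈ Icc (0:ℝ) 1, u x = u x₀ := by
  set c := u x₀
  set w : ℝ → ℝ := fun y => phiN n (deriv u y)
  obtain ⟨hu₁, -, hu'⟩ := contDiff_succ_iff_deriv.mp (show ContDiff ℝ (1 + 1) u from hu)
  have hu'' : Differentiable ℝ (deriv u) := hu'.differentiable one_ne_zero
  obtain ⟨M, hM⟩ := isCompact_Icc.exists_bound_of_continuousOn ha
  obtain ⟨K, hK⟩ := isCompact_Icc.exists_bound_of_continuousOn hu.continuous.continuousOn
  obtain ⟨L, hL₀, hL⟩ := exists_abs_fhat_le hf hf₀ K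
  have hM₀ : 0 ≤ M := (norm_nonneg _).trans (hM 0 ⟨le_rfl, zero_le_one⟩)
  have hw : ∀ x ∈ Ioo (0:ℝ) 1, HasDerivAt w (-(a x * fhat f (u x))) x := fun x hx => by
    rw [← hode x hx, neg_neg]
    exact ((differentiable_phiN n).comp hu'' x).hasDerivAt
  have hslope : ∀ x, |deriv u x| ≤ (phiD n)⁻¹ * |w x| := fun x => by
    rw [inv_mul_eq_div, le_div_iff₀ (phiD_pos n), mul_comm]
    exact phiD_mul_abs_le_abs_phiN n (deriv u x)
  have hforce : ∀ x ∈ Icc (0:ℝ) 1, |a x * fhat f (u x)| ≤ M * L * |u x - c| := fun x hx => by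
    have hcx : c ≤ u x := hmin hx
    rw [abs_mul, abs_of_nonneg (sub_nonneg.mpr hcx), mul_assoc]
    refine mul_le_mul (by simpa using hM x hx) ((hL (u x) ?_).trans ?_) (abs_nonneg _) hM₀
    · exact (le_abs_self _).trans (by simpa using hK x hx)
    · exact mul_le_mul_of_nonneg_left (max_le (by linarith) (by linarith)) hL₀
  have hH := eqOn_zero_of_abs_deriv_le_mul (H := fun x => (u x - c) ^ 2 + w x ^ 2)
    (C := (phiD n)⁻¹ + M * L)
    (((hu.continuous.sub continuous_const).pow 2).add
      (((differentiable_phiN n).continuous.comp hu'.continuous).pow 2)).continuousOn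
    (fun x hx => (((hu₁ x).hasDerivAt.sub_const c).pow 2).add ((hw x hx).pow 2))
    (fun x hx => by
      have := abs_two_mul_add_two_mul_le (p := u x - c) (q := w x)
        (s := -(a x * fhat f (u x))) (inv_nonneg.mpr (phiD_pos n).le) (mul_nonneg hM₀ hL₀)
        (hslope x) (by simpa only [abs_neg] using hforce x (Ioo_subset_Icc_self hx))
      simpa using this)
    hx₀ (by simp [c, w, hd, phiN_apply_zero])
  intro x hx
  have hsum := hH x hx
  nlinarith [sq_nonneg (u x - c), sq_nonneg (w x)]

theorem statement5_general (n : ℕ) (a f : ℝ → ℝ) (u0 : ℝ)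
    (ha : ContDiff ℝ 1 a)
    (hf : ContDiffOn ℝ 1 f (Ici 0))
    (hfeq : Feq f u0)
    (u : ℝ → ℝ) (hu : ContDiff ℝ 2 u)
    (hbc0 : deriv u 0 = 0) (hbc1 : deriv u 1 = 0)
    (hode : ∀ x ∈ Ioo (0:ℝ) 1, -deriv (fun y => phiN n (deriv u y)) x = a x * fhat f (u x)) :
    (∃ C : ℝ, 0 ≤ C ∧ ∀ x ∈ Icc (0:ℝ) 1, u x = -C) ∨ ∀ x ∈ Icc (0:ℝ) 1, 0 < u x := by
  by_cases hpos : ∀ x ∈ Icc (0:ℝ) 1, 0 < u x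
  · exact Or.inr hpos
  obtain ⟨y, hy, hyu⟩ := not_forall₂.mp hpos
  obtain ⟨x₀, hx₀, hmin⟩ :=
    isCompact_Icc.exists_isMinOn (nonempty_Icc.mpr zero_le_one) hu.continuous.continuousOn
  have hc : u x₀ ≤ 0 := (hmin hy).trans (not_lt.mp hyu)
  have hconst := eqOn_Icc_of_isMinOn_of_nonpos n ha.continuous.continuousOn hf hfeq.1 hu hode
    hx₀ hmin hc (deriv_eq_zero_of_isMinOn_Icc hbc0 hbc1 hx₀ hmin)
  exact Or.inl ⟨-u x₀, neg_nonneg.mpr hc, fun x hx => by rw [neg_neg, hconst x hx]⟩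

theorem statement5 (n : ℕ) (a f : ℝ → ℝ) (u0 : ℝ)
    (ha : ContDiff ℝ 1 a) (hapos : ∀ x ∈ Icc (0:ℝ) 1, 0 < a x)
    (hf : ContDiffOn ℝ 1 f (Ici 0)) (hu0 : 0 < u0)
    (hfeq : Feq f u0) (hfsgn : Fsgn f u0)
    (u : ℝ → ℝ) (hu : ContDiff ℝ 2 u)
    (hbc0 : deriv u 0 = 0) (hbc1 : deriv u 1 = 0)
    (hode : ∀ x ∈ Ioo (0:ℝ) 1, -deriv (fun y => phiN n (deriv u y)) x = a x * fhat f (u x)) :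
    (∃ C : ℝ, 0 ≤ C ∧ ∀ x ∈ Icc (0:ℝ) 1, u x = -C) ∨ ∀ x ∈ Icc (0:ℝ) 1, 0 < u x :=
  statement5_general n a f u0 ha hf hfeq u hu hbc0 hbc1 hode
end
end

section
/- Let a ∈ C¹([0,1]) with a > 0, and f ∈ C¹([0,∞)) satisfy (f_eq), (f_sgn) and (f_ap)'. Then there exists a constant M > 0, depending only on a, f and u0 (not on n), such that for every n ∈ ℕ, every classical solution u of (P_n) with 0 < min_{[0,1]} u < u0 satisfies ‖u‖_{W^{1,1}(0,1)} = ∫₀¹ |u| dx + ∫₀¹ |u'| dx ≤ M. -/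
open Set MeasureTheory Filter Topology

noncomputable section

/-!
Integrating the equation from `0` and from `1` and using the Neumann conditions gives
`φₙ(u'(x)) = -∫₀ˣ a f(u) = ∫ₓ¹ a f(u)`. Only the negative part of `f` is bounded, but it is
enough: the first representation bounds `φₙ(u')` from above and the second from below, so
`|φₙ(u')| ≤ ‖a‖₁ · max f⁻ =: c < 1`. The affine pieces of `φₙ` are tangent lines of `φ`, which is
concave on `[0, ∞)`, so `|φ| ≤ |φₙ|` and `|u'| ≤ φ⁻¹(c)` for every `n`. Finally
`u ≤ min u + φ⁻¹(c) < u0 + φ⁻¹(c)`.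
-/

lemma phi_neg (s : ℝ) : phi (-s) = -phi s := by
  simp [phi, neg_div]

lemma phiD_antitoneOn : AntitoneOn phiD (Ici 0) := by
  intro s hs t _ hst
  unfold phiD
  gcongr

lemma HasDerivAt.of_nhdsWithin_Iic_Ici {h f g : ℝ → ℝ} {a d : ℝ} (hf : HasDerivAt f d a)
    (hg : HasDerivAt g d a) (hl : h =ᶠ[𝓝[≤] a] f) (hr : h =ᶠ[𝓝[≥] a] g) : HasDerivAt h d a := by
  have := (hf.hasDerivWithinAt.congr_of_eventuallyEq_of_mem hl self_mem_Iic).union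
    (hg.hasDerivWithinAt.congr_of_eventuallyEq_of_mem hr self_mem_Ici)
  rwa [Iic_union_Ici, hasDerivWithinAt_univ] at this

lemma phi_le_phiN {n : ℕ} {s : ℝ} (hs : (n : ℝ) ≤ s) : phi s ≤ phiN n s := by
  have hn : (0 : ℝ) ≤ n := n.cast_nonneg
  have hmvt := (convex_Ici (n : ℝ)).image_sub_le_mul_sub_of_deriv_le
    (fun x _ => (hasDerivAt_phi x).continuousAt.continuousWithinAt)
    (fun x _ => (hasDerivAt_phi x).differentiableAt.differentiableWithinAt)
    (C := phiD n) (fun x hx => by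
      rw [interior_Ici] at hx
      rw [(hasDerivAt_phi x).deriv]
      exact phiD_antitoneOn hn (hn.trans hx.le) hx.le) n self_mem_Ici s hs hs
  rcases hs.eq_or_lt with h | h
  · rw [phiN_eq_phi (by linarith) h.ge]
  · rw [phiN, if_pos h]
    linarith

lemma abs_phi_le_abs_phiN_of_nonneg (n : ℕ) {s : ℝ} (hs : 0 ≤ s) : |phi s| ≤ |phiN n s| := by
  rcases le_or_gt s n with h | h
  · rw [phiN_eq_phi (by linarith [(n.cast_nonneg : (0 : ℝ) ≤ n)]) h]
  · have hphi : 0 ≤ phi s := div_nonneg hs (Real.sqrt_nonneg _)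
    rw [abs_of_nonneg hphi]
    exact (phi_le_phiN h.le).trans (le_abs_self _)

lemma abs_phi_le_abs_phiN (n : ℕ) (s : ℝ) : |phi s| ≤ |phiN n s| := by
  rcases le_total 0 s with hs | hs
  · exact abs_phi_le_abs_phiN_of_nonneg n hs
  · simpa [phi_neg, phiN_neg] using abs_phi_le_abs_phiN_of_nonneg n (neg_nonneg.2 hs)

lemma abs_le_phiInv_of_abs_phi_le {c s : ℝ} (hc : c < 1) (h : |phi s| ≤ c) :
    |s| ≤ phiInv c := by
  have h₁ : 0 < Real.sqrt (1 + s ^ 2) := Real.sqrt_pos.2 (by positivity)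
  have hc0 : 0 ≤ c := (abs_nonneg _).trans h
  have h₂ : 0 < 1 - c ^ 2 := by nlinarith
  rw [phi, abs_div, abs_of_pos h₁, div_le_iff₀ h₁] at h
  have hsq := pow_le_pow_left₀ (abs_nonneg s) h 2
  rw [mul_pow, Real.sq_sqrt (by positivity), sq_abs] at hsq
  rw [phiInv, le_div_iff₀ (Real.sqrt_pos.2 h₂), ← sq_le_sq₀ (by positivity) hc0, mul_pow,
    Real.sq_sqrt h₂.le, sq_abs]
  linarith

lemma abs_le_integral_of_hasDerivAt_le {f f' g : ℝ → ℝ} {a b x : ℝ}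
    (hf : ContinuousOn f (Icc a b)) (hderiv : ∀ y ∈ Ioo a b, HasDerivAt f (f' y) y)
    (hg : IntegrableOn g (Icc a b)) (hg0 : ∀ y ∈ Icc a b, 0 ≤ g y)
    (hf'g : ∀ y ∈ Ioo a b, f' y ≤ g y) (ha : f a = 0) (hb : f b = 0) (hx : x ∈ Icc a b) :
    |f x| ≤ ∫ y in a..b, g y := by
  have hab : a ≤ b := hx.1.trans hx.2
  have hle : ∫ y in a..x, g y ≤ ∫ y in a..b, g y :=
    intervalIntegral.integral_mono_interval le_rfl hx.1 hx.2
      (ae_restrict_of_forall_mem measurableSet_Ioc fun y hy => hg0 y (Ioc_subset_Icc_self hy))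
      ((intervalIntegrable_iff_integrableOn_Icc_of_le hab).2 hg)
  have hle' : ∫ y in x..b, g y ≤ ∫ y in a..b, g y :=
    intervalIntegral.integral_mono_interval hx.1 hx.2 le_rfl
      (ae_restrict_of_forall_mem measurableSet_Ioc fun y hy => hg0 y (Ioc_subset_Icc_self hy))
      ((intervalIntegrable_iff_integrableOn_Icc_of_le hab).2 hg)
  have hleft : f x - f a ≤ ∫ y in a..x, g y :=
    intervalIntegral.sub_le_integral_of_hasDeriv_right_of_le hx.1
      (hf.mono (Icc_subset_Icc_right hx.2))
      (fun y hy => (hderiv y ⟨hy.1, hy.2.trans_le hx.2⟩).hasDerivWithinAt)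
      (hg.mono_set (Icc_subset_Icc_right hx.2)) fun y hy => hf'g y ⟨hy.1, hy.2.trans_le hx.2⟩
  have hright : f b - f x ≤ ∫ y in x..b, g y :=
    intervalIntegral.sub_le_integral_of_hasDeriv_right_of_le hx.2
      (hf.mono (Icc_subset_Icc_left hx.1))
      (fun y hy => (hderiv y ⟨hx.1.trans_lt hy.1, hy.2⟩).hasDerivWithinAt)
      (hg.mono_set (Icc_subset_Icc_left hx.1)) fun y hy => hf'g y ⟨hx.1.trans_lt hy.1, hy.2⟩
  rw [abs_le]
  constructor <;> linarith

lemma IsPnSol.abs_phiN_deriv_le {a f u : ℝ → ℝ} {n : ℕ} {S : ℝ} (hu : IsPnSol a f n u)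
    (ha : Continuous a) (ha0 : ∀ x ∈ Icc (0 : ℝ) 1, 0 ≤ a x) (hS0 : 0 ≤ S)
    (hfS : ∀ s, 0 ≤ s → -f s ≤ S) {x : ℝ} (hx : x ∈ Icc (0 : ℝ) 1) :
    |phiN n (deriv u x)| ≤ (∫ t in (0 : ℝ)..1, a t) * S := by
  obtain ⟨hu2, hpos, h0, h1, hode⟩ := hu
  have hu' : ContDiff ℝ 1 (deriv u) := hu2.deriv' (n := 1)
  have hderiv : ∀ y ∈ Ioo (0 : ℝ) 1,
      HasDerivAt (fun y => phiN n (deriv u y)) (-(a y * f (u y))) y := by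
    intro y hy
    have hdiff := ((differentiable_phiN n) _).comp y (hu'.differentiable one_ne_zero y)
    rw [← hode y hy, neg_neg]
    exact hdiff.hasDerivAt
  rw [← intervalIntegral.integral_mul_const]
  refine abs_le_integral_of_hasDerivAt_le (f := fun y => phiN n (deriv u y))
    ((differentiable_phiN n).continuous.comp hu'.continuous).continuousOn hderiv
    (ha.mul continuous_const).integrableOn_Icc (fun y hy => mul_nonneg (ha0 y hy) hS0)
    (fun y hy => ?_) (by simp [h0, phiN_apply_zero]) (by simp [h1, phiN_apply_zero]) hx
  rw [← mul_neg]
  exact mul_le_mul_of_nonneg_left (hfS _ (hpos y hy).le) (ha0 y (Ioo_subset_Icc_self hy))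

lemma bddAbove_max_neg_image_Ici {f : ℝ → ℝ} {u0 : ℝ} (hf : ContinuousOn f (Ici 0))
    (hpos : ∀ s, u0 < s → 0 < f s) : BddAbove ((fun s => max (-f s) 0) '' Ici 0) := by
  obtain ⟨B, hB⟩ := (isCompact_Icc.image_of_continuousOn
    (s := Icc 0 u0) ((continuous_neg.max continuous_const).comp_continuousOn
      (hf.mono Icc_subset_Ici_self))).bddAbove
  refine ⟨max B 0, ?_⟩
  rintro _ ⟨s, hs, rfl⟩
  rcases le_or_gt s u0 with h | h
  · exact le_max_of_le_left (hB ⟨s, ⟨hs, h⟩, rfl⟩)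
  · show max (-f s) 0 ≤ max B 0
    rw [max_eq_right (by linarith [hpos s h])]
    exact le_max_right _ _

lemma integral_abs_le_of_abs_le {g : ℝ → ℝ} {a b C : ℝ} (hab : a ≤ b)
    (h : ∀ x ∈ Icc a b, |g x| ≤ C) : ∫ x in a..b, |g x| ≤ C * (b - a) := by
  have := intervalIntegral.norm_integral_le_of_norm_le_const (a := a) (b := b)
    (f := fun x => |g x|) (C := C) fun x hx => by
      rw [uIoc_of_le hab] at hx
      simpa using h x (Ioc_subset_Icc_self hx)
  simpa [abs_of_nonneg (sub_nonneg.2 hab)] using (le_abs_self _).trans this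

lemma abs_le_abs_add_of_abs_deriv_le {u : ℝ → ℝ} {K x x₀ : ℝ} (hu : Differentiable ℝ u)
    (hu' : ∀ y ∈ Icc (0 : ℝ) 1, |deriv u y| ≤ K) (hx : x ∈ Icc (0 : ℝ) 1)
    (hx₀ : x₀ ∈ Icc (0 : ℝ) 1) : |u x| ≤ |u x₀| + K := by
  have hlip := (convex_Icc (0 : ℝ) 1).norm_image_sub_le_of_norm_deriv_le
    (fun y _ => hu y) hu' hx₀ hx
  have hdist : ‖x - x₀‖ ≤ 1 := Real.dist_le_of_mem_Icc_01 hx hx₀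
  have hK : 0 ≤ K := (abs_nonneg _).trans (hu' x hx)
  rw [Real.norm_eq_abs] at hlip
  linarith [abs_sub_abs_le_abs_sub (u x) (u x₀), mul_le_of_le_one_right hK hdist]

theorem statement12_general (a f : ℝ → ℝ) (u0 : ℝ)
    (ha : ContDiff ℝ 1 a) (hapos : ∀ x ∈ Icc (0:ℝ) 1, 0 < a x)
    (hf : ContDiffOn ℝ 1 f (Ici 0)) (hu0 : 0 < u0)
    (hfsgn : Fsgn f u0)
    (hap' : Fap' a f) :
    ∃ M > (0:ℝ), ∀ (n : ℕ) (u : ℝ → ℝ), IsPnSol a f n u →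
      0 < sInf (u '' Icc (0:ℝ) 1) → sInf (u '' Icc (0:ℝ) 1) < u0 →
      (∫ x in (0:ℝ)..1, |u x|) + (∫ x in (0:ℝ)..1, |deriv u x|) ≤ M := by
  set S := sSup ((fun s => max (-f s) 0) '' Ici 0)
  have hbdd := bddAbove_max_neg_image_Ici hf.continuousOn hfsgn.2
  have hfS : ∀ s, 0 ≤ s → -f s ≤ S := fun s hs =>
    (le_max_left _ _).trans (le_csSup hbdd ⟨s, hs, rfl⟩)
  have hS0 : 0 ≤ S := (le_max_right _ _).trans (le_csSup hbdd ⟨0, self_mem_Ici, rfl⟩)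
  have ha0 : ∀ x ∈ Icc (0 : ℝ) 1, 0 ≤ a x := fun x hx => (hapos x hx).le
  set c := (∫ x in (0 : ℝ)..1, a x) * S
  have hc0 : 0 ≤ c := mul_nonneg (intervalIntegral.integral_nonneg zero_le_one ha0) hS0
  have hK : 0 ≤ phiInv c := div_nonneg hc0 (Real.sqrt_nonneg _)
  refine ⟨u0 + 2 * phiInv c, by positivity, fun n u hu hmin hmin_lt => ?_⟩
  obtain ⟨x₀, hx₀, hux₀⟩ := (isCompact_Icc.image_of_continuousOn
    hu.1.continuous.continuousOn).sInf_mem ((nonempty_Icc.2 zero_le_one).image u)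
  rw [← hux₀] at hmin hmin_lt
  have hu'_le : ∀ x ∈ Icc (0 : ℝ) 1, |deriv u x| ≤ phiInv c := fun x hx =>
    abs_le_phiInv_of_abs_phi_le hap'
      ((abs_phi_le_abs_phiN n _).trans (hu.abs_phiN_deriv_le ha.continuous ha0 hS0 hfS hx))
  have hu_le : ∀ x ∈ Icc (0 : ℝ) 1, |u x| ≤ u0 + phiInv c := fun x hx => by
    have := abs_le_abs_add_of_abs_deriv_le (hu.1.differentiable two_ne_zero) hu'_le hx hx₀
    rw [abs_of_pos hmin] at this
    linarith
  calc (∫ x in (0:ℝ)..1, |u x|) + (∫ x in (0:ℝ)..1, |deriv u x|)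
      ≤ (u0 + phiInv c) * (1 - 0) + phiInv c * (1 - 0) :=
        add_le_add (integral_abs_le_of_abs_le zero_le_one hu_le)
          (integral_abs_le_of_abs_le zero_le_one hu'_le)
    _ = u0 + 2 * phiInv c := by ring

theorem statement12 (a f : ℝ → ℝ) (u0 : ℝ)
    (ha : ContDiff ℝ 1 a) (hapos : ∀ x ∈ Icc (0:ℝ) 1, 0 < a x)
    (hf : ContDiffOn ℝ 1 f (Ici 0)) (hu0 : 0 < u0)
    (hfeq : Feq f u0) (hfsgn : Fsgn f u0)
    (hap' : Fap' a f) :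
    ∃ M > (0:ℝ), ∀ (n : ℕ) (u : ℝ → ℝ), IsPnSol a f n u →
      0 < sInf (u '' Icc (0:ℝ) 1) → sInf (u '' Icc (0:ℝ) 1) < u0 →
      (∫ x in (0:ℝ)..1, |u x|) + (∫ x in (0:ℝ)..1, |deriv u x|) ≤ M :=
  statement12_general a f u0 ha hapos hf hu0 hfsgn hap'
end
end
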